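/- With notation as above, for every 0 < M < 1 and every z in the closed disk D(1,M), the entire extension P(z) = z^{|E(S)|}(1-z)^{|∂S|} satisfies |P(z)| ≤ ((1+M)/(1-M))^{|E(S)|} · P(1-M). -/

import Mathlib

lemma norm_le_one_add_of_norm_one_sub_le {R : Type*} [SeminormedRing R] [NormOneClass R]
    {z : R} {M : ℝ} (hz : ‖1 - z‖ ≤ M) : ‖z‖ ≤ 1 + M :=
  calc ‖z‖ = ‖1 - (1 - z)‖ := by rw [sub_sub_cancel]
    _ ≤ ‖(1 : R)‖ + ‖1 - z‖ := norm_sub_le _ _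
    _ ≤ 1 + M := by rw [norm_one]; linarith

lemma norm_pow_mul_one_sub_pow_le {R : Type*} [SeminormedRing R] [NormOneClass R]
    {z : R} {M : ℝ} (hz : ‖1 - z‖ ≤ M) (a b : ℕ) :
    ‖z ^ a * (1 - z) ^ b‖ ≤ (1 + M) ^ a * M ^ b :=
  calc ‖z ^ a * (1 - z) ^ b‖ ≤ ‖z‖ ^ a * ‖1 - z‖ ^ b :=
        (norm_mul_le _ _).trans (mul_le_mul (norm_pow_le _ _) (norm_pow_le _ _)
          (norm_nonneg _) (by positivity))
    _ ≤ (1 + M) ^ a * M ^ b := by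
        have hM : 0 ≤ M := (norm_nonneg _).trans hz
        gcongr
        exact norm_le_one_add_of_norm_one_sub_le hz

theorem cluster_prob_complex_bound_near_one_general
    (a b : ℕ) (P : ℂ → ℂ) (hP : P = fun z : ℂ => z ^ a * (1 - z) ^ b)
    (M : ℝ) (hM1 : M < 1) :
    ∀ z ∈ Metric.closedBall (1 : ℂ) M,
      ‖P z‖ ≤
        ((1 + M) / (1 - M)) ^ a * ((1 - M) ^ a * (1 - (1 - M)) ^ b) := by
  intro z hz
  subst hP
  have hz' : ‖1 - z‖ ≤ M := by rwa [Metric.mem_closedBall, dist_comm, dist_eq_norm] at hz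
  calc ‖z ^ a * (1 - z) ^ b‖ ≤ (1 + M) ^ a * M ^ b := norm_pow_mul_one_sub_pow_le hz' a b
    _ = ((1 + M) / (1 - M)) ^ a * ((1 - M) ^ a * (1 - (1 - M)) ^ b) := by
        rw [div_pow, sub_sub_cancel, ← mul_assoc,
          div_mul_cancel₀ _ (pow_ne_zero a (sub_pos.2 hM1).ne')]

/-- For the polynomial `P(z) = z^{|E(S)|} (1-z)^{|∂S|}` (with `a = |E(S)|`,
`b = |∂S|` nonnegative integers), for every `0 < M < 1` and every `z` in the
closed disk `D(1,M)` we have `|P(z)| ≤ ((1+M)/(1-M))^{|E(S)|} · P(1-M)`. -/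
theorem cluster_prob_complex_bound_near_one
    (a b : ℕ) (P : ℂ → ℂ) (hP : P = fun z : ℂ => z ^ a * (1 - z) ^ b)
    (M : ℝ) (hM0 : 0 < M) (hM1 : M < 1) :
    ∀ z ∈ Metric.closedBall (1 : ℂ) M,
      ‖P z‖ ≤
        ((1 + M) / (1 - M)) ^ a * ((1 - M) ^ a * (1 - (1 - M)) ^ b) :=
  cluster_prob_complex_bound_near_one_general a b P hP M hM1
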